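/- The constrained shortest path problem reduces in polynomial time to the problem of finding an optimal charging path (OCP) in a GTDS: given a CSP instance (G, o, d, M) with positive edge weights W and nonnegative resource costs U, the GTDS instance with no charging self-loops, initial state of charge SoC = M, edge travel times W, and edge energy consumptions U has an OCP of total travel time ≤ T from o to d if and only if the CSP instance has a path of weight ≤ T whose total resource cost is ≤ M. -/

import Mathlib

variable {V : Type*}

/-- The list of consecutive edge pairs of a vertex list. -/
def edgesOf (p : List V) : List (V × V) := p.zip p.tail

/-- `p` is an `o`–`d` path in the directed graph with adjacency `A`. -/
def IsDiPath (A : V → V → Prop) (o d : V) (p : List V) : Prop :=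
  p.Chain' A ∧ p.head? = some o ∧ p.getLast? = some d

theorem chain'_mem_zip {A : V → V → Prop} :
    ∀ {p : List V}, p.Chain' A → ∀ e ∈ p.zip p.tail, A e.1 e.2
  | [], _, e, he => by simp at he
  | [a], _, e, he => by simp [List.zip] at he
  | a :: b :: l, h, e, he => by
    rw [List.Chain', List.isChain_cons_cons] at h
    simp only [List.tail_cons, List.zip_cons_cons, List.mem_cons] at he
    rcases he with rfl | he
    · exact h.1
    · exact chain'_mem_zip h.2 e he

/-- CSP reduces to finding an OCP in a GTDS with no charging self-loops:
with initial state of charge `M`, there is a charge-feasible `o`–`d` path of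
total travel time ≤ `T` (SoC staying ≥ 0 along every prefix) iff there is an
`o`–`d` path of total weight ≤ `T` and total resource cost ≤ `M`. -/
theorem csp_reduces_to_ocp
    (A : V → V → Prop) (w u : V → V → ℝ)
    (hw : ∀ a b, A a b → 0 < w a b) (hu : ∀ a b, A a b → 0 ≤ u a b)
    (o d : V) (M T : ℝ) :
    (∃ p : List V, IsDiPath A o d p ∧
        ((edgesOf p).map (fun e => w e.1 e.2)).sum ≤ T ∧
        ∀ i ≤ (edgesOf p).length,
          0 ≤ M - (((edgesOf p).take i).map (fun e => u e.1 e.2)).sum) ↔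
    (∃ p : List V, IsDiPath A o d p ∧
        ((edgesOf p).map (fun e => w e.1 e.2)).sum ≤ T ∧
        ((edgesOf p).map (fun e => u e.1 e.2)).sum ≤ M) := by
  constructor
  · rintro ⟨p, hp, hw', hfeas⟩
    refine ⟨p, hp, hw', ?_⟩
    have h := hfeas (edgesOf p).length le_rfl
    rw [List.take_length] at h
    linarith
  · rintro ⟨p, hp, hw', hM⟩
    refine ⟨p, hp, hw', fun i hi => ?_⟩
    have hmem : ∀ e ∈ edgesOf p, A e.1 e.2 := by
      have hc := hp.1
      intro e he
      exact chain'_mem_zip hc e he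
    have hsub : ((edgesOf p).take i).map (fun e => u e.1 e.2) ++
        ((edgesOf p).drop i).map (fun e => u e.1 e.2) =
        (edgesOf p).map (fun e => u e.1 e.2) := by
      rw [← List.map_append, List.take_append_drop]
    have hdrop : 0 ≤ (((edgesOf p).drop i).map (fun e => u e.1 e.2)).sum := by
      apply List.sum_nonneg
      intro x hx
      obtain ⟨e, he, rfl⟩ := List.mem_map.mp hx
      exact hu e.1 e.2 (hmem e (List.mem_of_mem_drop he))
    have : (((edgesOf p).take i).map (fun e => u e.1 e.2)).sum +
        (((edgesOf p).drop i).map (fun e => u e.1 e.2)).sum =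
        ((edgesOf p).map (fun e => u e.1 e.2)).sum := by
      rw [← List.sum_append, hsub]
    linarith
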